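/- arXiv:2006.04378 — 3 statements merged into one kernel-verified Lean document; each statement's English description precedes it below -/
import Mathlib

section
/- Let W be a random variable on [0,1] with density f_W(t) = (Γ(α) β^α)^{-1} (-ln t)^{α-1} t^{1/β-1} on [0,1], with α > 1 and β ≥ 1. Then for every β' > β and every λ > 0, E[e^{-λ W}] ≤ ω(α,β,β') λ^{-1/β'}, where ω(α,β,β') = (α-1)^{α-1} Γ(1/β') / (Γ(α) β^α e^{α-1} (β^{-1} - β'^{-1})^{α-1}). -/
open MeasureTheory Real

lemma aux_rpow_exp_bound {a c s : ℝ} (ha : 0 < a) (hc : 0 < c) (hs : 0 ≤ s) :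
    s ^ a * Real.exp (-(c * s)) ≤ (a / c) ^ a * Real.exp (-a) := by
  rcases eq_or_lt_of_le hs with rfl | hs
  · rw [Real.zero_rpow ha.ne', zero_mul]
    positivity
  · have h1 : c * s / a ≤ Real.exp (c * s / a - 1) := by
      have := Real.add_one_le_exp (c * s / a - 1); linarith
    have h2 : (c * s / a) ^ a ≤ Real.exp (c * s / a - 1) ^ a :=
      Real.rpow_le_rpow (by positivity) h1 ha.le
    have e1 : (c * s / a) ^ a = (c / a) ^ a * s ^ a := by
      rw [show c * s / a = (c / a) * s by ring, Real.mul_rpow (by positivity) hs.le]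
    have e2 : Real.exp (c * s / a - 1) ^ a = Real.exp (-a) * Real.exp (c * s) := by
      rw [← Real.exp_mul, ← Real.exp_add]
      congr 1
      field_simp
      ring
    have h3 : s ^ a ≤ (a / c) ^ a * (Real.exp (-a) * Real.exp (c * s)) := by
      have hmul : (a / c) ^ a * (c / a) ^ a = 1 := by
        rw [← Real.mul_rpow (by positivity) (by positivity),
          show a / c * (c / a) = 1 by field_simp, Real.one_rpow]
      calc s ^ a = (a / c) ^ a * ((c / a) ^ a * s ^ a) := by
            rw [← mul_assoc, hmul, one_mul]
        _ ≤ (a / c) ^ a * (Real.exp (-a) * Real.exp (c * s)) := by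
            rw [← e1, ← e2]
            exact mul_le_mul_of_nonneg_left h2 (by positivity)
    calc s ^ a * Real.exp (-(c * s))
        ≤ (a / c) ^ a * (Real.exp (-a) * Real.exp (c * s)) * Real.exp (-(c * s)) :=
          mul_le_mul_of_nonneg_right h3 (Real.exp_pos _).le
      _ = (a / c) ^ a * Real.exp (-a) := by
          rw [mul_assoc, mul_assoc, ← Real.exp_add, ← Real.exp_add]
          ring_nf

/-- If `W` has the log-gamma type density with parameters `α > 1`, `β ≥ 1`, then for every
`β' > β` and every `λ > 0`, `E[exp(-λ W)] ≤ ω(α,β,β') λ^(-1/β')` with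
`ω(α,β,β') = (α-1)^(α-1) Γ(1/β') / (Γ(α) β^α e^(α-1) (β⁻¹ - β'⁻¹)^(α-1))`. -/
theorem loggamma_laplace_alpha_gt_one {Ω : Type*} [MeasurableSpace Ω] (μ : Measure Ω)
    [IsProbabilityMeasure μ] (W : Ω → ℝ) (hWmeas : Measurable W)
    (α β : ℝ) (hα : 1 < α) (hβ : 1 ≤ β)
    (hpdf : Measure.map W μ = volume.withDensity (fun t =>
      ENNReal.ofReal (Set.indicator (Set.Ioc (0:ℝ) 1)
        (fun t => (1 / (Real.Gamma α * β ^ α)) * (-Real.log t) ^ (α - 1) * t ^ (1/β - 1)) t)))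
    (β' : ℝ) (hβ' : β < β') (lam : ℝ) (hlam : 0 < lam) :
    ∫ ω, Real.exp (-lam * W ω) ∂μ ≤
      ((α - 1) ^ (α - 1) * Real.Gamma (1/β')) /
        (Real.Gamma α * β ^ α * Real.exp 1 ^ (α - 1) * (β⁻¹ - β'⁻¹) ^ (α - 1)) *
        lam ^ (-(1/β')) := by
  have hβ0 : (0:ℝ) < β := lt_of_lt_of_le one_pos hβ
  have hβ'0 : (0:ℝ) < β' := hβ0.trans hβ'
  set a : ℝ := α - 1 with ha_def
  have ha : 0 < a := by simp [ha_def]; linarith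
  set p : ℝ := 1/β' with hp_def
  have hp : 0 < p := by positivity
  set c : ℝ := β⁻¹ - β'⁻¹ with hc_def
  have hc : 0 < c := by
    have : β'⁻¹ < β⁻¹ := inv_strictAnti₀ hβ0 hβ'
    simpa [hc_def] using sub_pos.mpr this
  have hΓα : 0 < Real.Gamma α := Real.Gamma_pos_of_pos (by linarith)
  have hβα : 0 < β ^ α := Real.rpow_pos_of_pos hβ0 α
  have hΓp : 0 < Real.Gamma p := Real.Gamma_pos_of_pos hp
  set C : ℝ := 1 / (Real.Gamma α * β ^ α) with hC_def
  have hC : 0 < C := by positivity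
  set M : ℝ := (a / c) ^ a * Real.exp (-a) with hM_def
  have hM : 0 < M := by positivity
  set R : ℝ := (a ^ a * Real.Gamma p) /
      (Real.Gamma α * β ^ α * Real.exp 1 ^ a * c ^ a) * lam ^ (-p) with hR_def
  have hRnn : 0 ≤ R := by positivity
  -- key identity between constants
  have hRK : C * M * Real.Gamma p * lam ^ (-p) = R := by
    rw [hR_def, hC_def, hM_def, Real.div_rpow ha.le hc.le, Real.exp_one_rpow,
      Real.exp_neg]
    field_simp
  -- pointwise bound on (0,1]
  have hpt : ∀ t ∈ Set.Ioc (0:ℝ) 1,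
      (-Real.log t) ^ a * t ^ (1/β - 1) ≤ M * t ^ (p - 1) := by
    intro t ht
    obtain ⟨ht0, ht1⟩ := ht
    have hs : 0 ≤ -Real.log t := by
      have := Real.log_nonpos ht0.le ht1
      linarith
    have hsplit : t ^ (1/β - 1) = t ^ c * t ^ (p - 1) := by
      rw [← Real.rpow_add ht0]
      congr 1
      rw [hc_def, hp_def]
      field_simp
      ring
    have htc : t ^ c = Real.exp (-(c * -Real.log t)) := by
      rw [Real.rpow_def_of_pos ht0]
      congr 1
      ring
    calc (-Real.log t) ^ a * t ^ (1/β - 1)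
        = ((-Real.log t) ^ a * Real.exp (-(c * -Real.log t))) * t ^ (p - 1) := by
          rw [hsplit, htc]; ring
      _ ≤ M * t ^ (p - 1) := by
          refine mul_le_mul_of_nonneg_right ?_ (Real.rpow_nonneg ht0.le _)
          exact aux_rpow_exp_bound ha hc hs
  -- measurability of the density
  have hfmeas : Measurable (fun t : ℝ =>
      ENNReal.ofReal (Set.indicator (Set.Ioc (0:ℝ) 1)
        (fun t => C * (-Real.log t) ^ a * t ^ (1/β - 1)) t)) := by
    refine Measurable.ennreal_ofReal (Measurable.indicator ?_ measurableSet_Ioc)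
    exact ((Real.measurable_log.neg.pow_const a).const_mul C).mul
      (measurable_id.pow_const (1/β - 1))
  -- rewrite expectation as a lintegral
  have hnn : 0 ≤ᵐ[μ] fun ω => Real.exp (-lam * W ω) :=
    Filter.Eventually.of_forall fun ω => (Real.exp_pos _).le
  have hmeas2 : Measurable fun t : ℝ => ENNReal.ofReal (Real.exp (-lam * t)) :=
    ((measurable_id.const_mul (-lam)).exp).ennreal_ofReal
  rw [integral_eq_lintegral_of_nonneg_ae hnn
    ((hWmeas.const_mul (-lam)).exp.aestronglyMeasurable)]
  refine le_trans (ENNReal.toReal_le_of_le_ofReal hRnn ?_) (le_of_eq ?_)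
  · -- main lintegral bound
    have step1 : ∫⁻ ω, ENNReal.ofReal (Real.exp (-lam * W ω)) ∂μ
        = ∫⁻ t, (fun t : ℝ =>
            ENNReal.ofReal (Set.indicator (Set.Ioc (0:ℝ) 1)
              (fun t => C * (-Real.log t) ^ a * t ^ (1/β - 1)) t)) t *
            ENNReal.ofReal (Real.exp (-lam * t)) := by
      rw [← lintegral_map hmeas2 hWmeas, hpdf,
        lintegral_withDensity_eq_lintegral_mul volume hfmeas hmeas2]
      rfl
    rw [step1]
    have step2 : ∀ t : ℝ,
        ENNReal.ofReal (Set.indicator (Set.Ioc (0:ℝ) 1)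
          (fun t => C * (-Real.log t) ^ a * t ^ (1/β - 1)) t) *
          ENNReal.ofReal (Real.exp (-lam * t))
        ≤ ENNReal.ofReal (C * M * Real.Gamma p * lam ^ (-p)) *
            ProbabilityTheory.gammaPDF p lam t := by
      intro t
      by_cases ht : t ∈ Set.Ioc (0:ℝ) 1
      · rw [Set.indicator_of_mem ht]
        have ht0 : 0 < t := ht.1
        have hs : 0 ≤ -Real.log t := by
          have := Real.log_nonpos ht0.le ht.2; linarith
        have hX : 0 ≤ C * (-Real.log t) ^ a * t ^ (1/β - 1) :=
          mul_nonneg (mul_nonneg hC.le (Real.rpow_nonneg hs _))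
            (Real.rpow_nonneg ht0.le _)
        rw [ProbabilityTheory.gammaPDF_of_nonneg ht0.le,
          ← ENNReal.ofReal_mul hX, ← ENNReal.ofReal_mul (by positivity)]
        refine ENNReal.ofReal_le_ofReal ?_
        have hexp : Real.exp (-lam * t) = Real.exp (-(lam * t)) := by ring_nf
        have key := mul_le_mul_of_nonneg_left (hpt t ht) hC.le
        have hcancel : lam ^ (-p) * lam ^ p = 1 := by
          rw [← Real.rpow_add hlam]; simp
        have hrearr : C * M * Real.Gamma p * lam ^ (-p) *
            (lam ^ p / Real.Gamma p * t ^ (p - 1) * Real.exp (-(lam * t)))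
            = (lam ^ (-p) * lam ^ p) * (Real.Gamma p / Real.Gamma p) *
              (C * (M * t ^ (p - 1)) * Real.exp (-(lam * t))) := by ring
        calc C * (-Real.log t) ^ a * t ^ (1/β - 1) * Real.exp (-lam * t)
            ≤ C * (M * t ^ (p - 1)) * Real.exp (-lam * t) := by
              refine mul_le_mul_of_nonneg_right ?_ (Real.exp_pos _).le
              calc C * (-Real.log t) ^ a * t ^ (1/β - 1)
                  = C * ((-Real.log t) ^ a * t ^ (1/β - 1)) := by ring
                _ ≤ C * (M * t ^ (p - 1)) := key
          _ = C * M * Real.Gamma p * lam ^ (-p) *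
              (lam ^ p / Real.Gamma p * t ^ (p - 1) * Real.exp (-(lam * t))) := by
              rw [hexp, hrearr, hcancel, div_self hΓp.ne', one_mul, one_mul]
      · rw [Set.indicator_of_notMem ht]
        simp
    calc ∫⁻ t, ENNReal.ofReal (Set.indicator (Set.Ioc (0:ℝ) 1)
          (fun t => C * (-Real.log t) ^ a * t ^ (1/β - 1)) t) *
          ENNReal.ofReal (Real.exp (-lam * t))
        ≤ ∫⁻ t, ENNReal.ofReal (C * M * Real.Gamma p * lam ^ (-p)) *
            ProbabilityTheory.gammaPDF p lam t := lintegral_mono step2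
      _ = ENNReal.ofReal (C * M * Real.Gamma p * lam ^ (-p)) := by
          have hmg : Measurable (ProbabilityTheory.gammaPDF p lam) :=
            (ProbabilityTheory.measurable_gammaPDFReal p lam).ennreal_ofReal
          rw [lintegral_const_mul _ hmg,
            ProbabilityTheory.lintegral_gammaPDF_eq_one hp hlam, mul_one]
      _ ≤ ENNReal.ofReal R := by rw [hRK]
  · -- R is the stated right-hand side
    rw [hR_def]
end

section
/- Let U be a positive random variable and suppose there exist constants C > 0 and κ > 0 such that E[e^{-λ U}] ≤ C λ^{-κ} for all λ > 0. For ε > 0, let (U_n^ε)_{n≥1} be i.i.d. copies of ε² U, s_n^ε their partial sums, and N_T^ε = inf{n ≥ 1 : s_n^ε ≥ T}. Then for every j ∈ ℕ, P(N_T^ε > j) ≤ ( e T C^{1/κ} / (j κ ε²) )^{jκ}. -/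
open MeasureTheory ProbabilityTheory Real Finset

/-!
Chernoff's bound for the lower tail: `N_T > j` forces `s_j < T`, and for every `λ > 0`
`P(s_j < T) ≤ e^{λT} E[e^{-λ U_1^ε}]^j ≤ e^{λT} (C (λε²)^{-κ})^j`.
The choice `λ = jκ/T` minimises the right-hand side and gives the stated bound.
-/

lemma lt_of_lt_sInf_firstPassage {f : ℕ → ℝ} {T : ℝ} {j : ℕ} (hj : 1 ≤ j)
    (h : j < sInf {n | 1 ≤ n ∧ T ≤ f n}) : f j < T := by
  by_contra! hT
  exact h.not_ge (Nat.sInf_le ⟨hj, hT⟩)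

lemma integrable_exp_neg_mul_of_nonneg {Ω : Type*} [MeasurableSpace Ω] {μ : Measure Ω}
    [IsFiniteMeasure μ] {X : Ω → ℝ} (hX : Measurable X) (hX0 : ∀ᵐ ω ∂μ, 0 ≤ X ω)
    {t : ℝ} (ht : 0 ≤ t) : Integrable (fun ω => exp (-t * X ω)) μ := by
  refine (integrable_const (1 : ℝ)).mono' (hX.const_mul _).exp.aestronglyMeasurable ?_
  filter_upwards [hX0] with ω hω
  rw [norm_of_nonneg (exp_pos _).le, exp_le_one_iff]
  nlinarith

lemma measureReal_sum_le_le_exp_mul_pow {Ω ι : Type*} [MeasurableSpace Ω] {μ : Measure Ω}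
    [IsFiniteMeasure μ] {X : ι → Ω → ℝ} (hindep : iIndepFun X μ) (hmeas : ∀ i, Measurable (X i))
    (S : Finset ι) {t B : ℝ} (ht : 0 ≤ t)
    (hint : ∀ i ∈ S, Integrable (fun ω => exp (-t * X i ω)) μ)
    (hB : ∀ i ∈ S, mgf (X i) μ (-t) ≤ B) (T : ℝ) :
    μ.real {ω | ∑ i ∈ S, X i ω ≤ T} ≤ exp (t * T) * B ^ #S := by
  have hchernoff := measure_le_le_exp_mul_mgf (X := ∑ i ∈ S, X i) (μ := μ) T
    (neg_nonpos.mpr ht) (hindep.integrable_exp_mul_sum hmeas hint)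
  rw [neg_neg, hindep.mgf_sum hmeas] at hchernoff
  simp only [Finset.sum_apply] at hchernoff
  refine hchernoff.trans (mul_le_mul_of_nonneg_left ?_ (exp_pos _).le)
  calc ∏ i ∈ S, mgf (X i) μ (-t) ≤ ∏ _i ∈ S, B := prod_le_prod (fun _ _ => mgf_nonneg) hB
    _ = B ^ #S := prod_const B

lemma exp_mul_pow_rpow_neg_eq {C κ T a : ℝ} (hC : 0 ≤ C) (hκ : 0 < κ) (hT : 0 < T) (ha : 0 < a)
    {n : ℕ} (hn : 0 < n) :
    exp (n * κ / T * T) * (C * (a * (n * κ / T)) ^ (-κ)) ^ n =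
      (exp 1 * T * C ^ (1 / κ) / (n * κ * a)) ^ ((n : ℝ) * κ) := by
  have hn' : (0 : ℝ) < n := by exact_mod_cast hn
  have hbase : exp κ * (C * (a * (n * κ / T)) ^ (-κ)) =
      (exp 1 * T * C ^ (1 / κ) / (n * κ * a)) ^ κ := by
    rw [rpow_neg (by positivity), ← inv_rpow (by positivity),
      show (a * (n * κ / T))⁻¹ = T / (n * κ * a) by field_simp,
      show exp 1 * T * C ^ (1 / κ) / (n * κ * a) = exp 1 * C ^ (1 / κ) * (T / (n * κ * a)) by ring,
      mul_rpow (by positivity) (by positivity), mul_rpow (by positivity) (by positivity),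
      exp_one_rpow, ← rpow_mul hC, one_div_mul_cancel hκ.ne', rpow_one]
    ring
  rw [div_mul_cancel₀ _ hT.ne', exp_nat_mul, ← mul_pow, hbase, ← rpow_natCast,
    ← rpow_mul (by positivity), mul_comm κ]

/-- If `E[e^(-λU)] ≤ C λ^(-κ)` for all `λ > 0` and `(Uₙᵉ)` are i.i.d. copies of `ε²U`, then
`P(N_T^ε > j) ≤ (e T C^(1/κ) / (j κ ε²))^(jκ)`. -/
theorem firstPassage_tail_bound {Ω : Type*} [MeasurableSpace Ω] (μ : Measure Ω)
    [IsProbabilityMeasure μ] (U : Ω → ℝ) (hUmeas : Measurable U) (hUpos : ∀ ω, 0 < U ω)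
    (C κ : ℝ) (hC : 0 < C) (hκ : 0 < κ)
    (hlap : ∀ lam : ℝ, 0 < lam → ∫ ω, Real.exp (-lam * U ω) ∂μ ≤ C * lam ^ (-κ))
    (ε : ℝ) (hε : 0 < ε)
    (Uε : ℕ → Ω → ℝ) (hUεmeas : ∀ n, Measurable (Uε n))
    (hindep : iIndepFun Uε μ)
    (hident : ∀ n, Measure.map (Uε n) μ = Measure.map (fun ω => ε ^ 2 * U ω) μ)
    (T : ℝ) (hT : 0 < T)
    (s : ℕ → Ω → ℝ) (hs : ∀ n ω, s n ω = ∑ k ∈ Finset.range n, Uε (k + 1) ω)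
    (N : Ω → ℕ) (hN : ∀ ω, N ω = sInf {n | 1 ≤ n ∧ T ≤ s n ω})
    (j : ℕ) :
    (μ {ω | j < N ω}).toReal ≤
      (Real.exp 1 * T * C ^ (1/κ) / (j * κ * ε ^ 2)) ^ ((j : ℝ) * κ) := by
  rcases Nat.eq_zero_or_pos j with rfl | hj
  · rw [CharP.cast_eq_zero, zero_mul, rpow_zero]
    exact measureReal_le_one
  set lam : ℝ := j * κ / T
  have hlam : 0 < lam := by positivity
  have hid : ∀ n, IdentDistrib (Uε n) (fun ω => ε ^ 2 * U ω) μ μ := fun n =>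
    ⟨(hUεmeas n).aemeasurable, (hUmeas.const_mul _).aemeasurable, hident n⟩
  have hnonneg : ∀ n, ∀ᵐ ω ∂μ, 0 ≤ Uε n ω := fun n =>
    (hid n).symm.ae_snd measurableSet_Ici (ae_of_all _ fun ω => by have := hUpos ω; positivity)
  have hmgf : ∀ n, mgf (Uε n) μ (-lam) ≤ C * (ε ^ 2 * lam) ^ (-κ) := fun n => by
    rw [mgf_congr_of_identDistrib _ _ (hid n), mgf_const_mul, mul_neg]
    exact hlap _ (by positivity)
  have hchernoff := measureReal_sum_le_le_exp_mul_pow (hindep.precomp (add_left_injective 1))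
    (fun k => hUεmeas (k + 1)) (range j) hlam.le
    (fun k _ => integrable_exp_neg_mul_of_nonneg (hUεmeas _) (hnonneg _) hlam.le)
    (fun k _ => hmgf (k + 1)) T
  simp only [← hs, card_range] at hchernoff
  calc (μ {ω | j < N ω}).toReal ≤ μ.real {ω | s j ω ≤ T} :=
        measureReal_mono fun ω hω => (lt_of_lt_sInf_firstPassage hj (hN ω ▸ hω.out)).le
    _ ≤ _ := hchernoff
    _ = _ := exp_mul_pow_rpow_neg_eq hC.le hκ hT (by positivity) hj
end

section
/- For ε > 0, let f(t) = √(ln(ε² e / t)) / (ε √(2 e π t)) for t ∈ (0, e ε²] and f(t) = 0 otherwise. Then f is a probability density function on ℝ, i.e., ∫_0^{eε²} f(t) dt = 1. -/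
open MeasureTheory Real

/-- The function `t ↦ √(ln(ε² e/t)) / (ε √(2eπt))` on `(0, eε²]` integrates to one,
hence is a probability density function. -/
theorem heatball_exit_density_integral (ε : ℝ) (hε : 0 < ε) :
    ∫ t in Set.Ioc (0:ℝ) (Real.exp 1 * ε ^ 2),
      Real.sqrt (Real.log (ε ^ 2 * Real.exp 1 / t)) /
        (ε * Real.sqrt (2 * Real.exp 1 * π * t)) = 1 := by
  set c : ℝ := Real.exp 1 * ε ^ 2 with hc
  have hcpos : 0 < c := by positivity
  set g : ℝ → ℝ := fun t =>
    Real.sqrt (Real.log (ε ^ 2 * Real.exp 1 / t)) /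
      (ε * Real.sqrt (2 * Real.exp 1 * π * t)) with hg
  set f : ℝ → ℝ := fun x => c * Real.exp (-x) with hf
  -- Ioc → Ioo
  have h0 : ∫ t in Set.Ioc (0:ℝ) c, g t = ∫ t in Set.Ioo (0:ℝ) c, g t :=
    integral_Ioc_eq_integral_Ioo
  -- the image of `Ioi 0` under `f`
  have himg : f '' Set.Ioi (0:ℝ) = Set.Ioo (0:ℝ) c := by
    ext y
    constructor
    · rintro ⟨x, hx, rfl⟩
      refine ⟨by positivity, ?_⟩
      have : Real.exp (-x) < 1 := Real.exp_lt_one_iff.2 (by linarith [Set.mem_Ioi.1 hx])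
      calc c * Real.exp (-x) < c * 1 := by
            exact mul_lt_mul_of_pos_left this hcpos
        _ = c := mul_one c
    · rintro ⟨hy0, hyc⟩
      refine ⟨Real.log c - Real.log y, ?_, ?_⟩
      · have := Real.log_lt_log hy0 hyc
        simpa using sub_pos.2 this
      · show c * Real.exp (-(Real.log c - Real.log y)) = y
        rw [neg_sub, Real.exp_sub, Real.exp_log hy0, Real.exp_log hcpos]
        field_simp
  -- injectivity
  have hinj : Set.InjOn f (Set.Ioi 0) := by
    intro a _ b _ hab
    have := mul_left_cancel₀ hcpos.ne' hab
    exact neg_injective (Real.exp_injective this)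
  -- derivative
  have hderiv : ∀ x ∈ Set.Ioi (0:ℝ),
      HasDerivWithinAt f (-(c * Real.exp (-x))) (Set.Ioi 0) x := by
    intro x _
    have h1 : HasDerivAt (fun x : ℝ => Real.exp (-x)) (Real.exp (-x) * (-1)) x :=
      (Real.hasDerivAt_exp (-x)).comp x (hasDerivAt_neg x)
    have h2 : HasDerivAt f (c * (Real.exp (-x) * (-1))) x := h1.const_mul c
    have h3 : c * (Real.exp (-x) * (-1)) = -(c * Real.exp (-x)) := by ring
    exact (h3 ▸ h2).hasDerivWithinAt
  have hchg := integral_image_eq_integral_abs_deriv_smul (f := f)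
    (f' := fun x => -(c * Real.exp (-x))) measurableSet_Ioi hderiv hinj g
  rw [himg] at hchg
  -- pointwise identity for the transformed integrand
  have hpt : ∀ x ∈ Set.Ioi (0:ℝ),
      |(-(c * Real.exp (-x)))| • g (f x)
        = (Real.sqrt (2 * π))⁻¹ * (x ^ ((3:ℝ)/2 - 1) * Real.exp (-(2⁻¹ * x))) := by
    intro x hx
    have hx0 : 0 < x := hx
    have habs : |(-(c * Real.exp (-x)))| = c * Real.exp (-x) := by
      rw [abs_neg, abs_of_pos (by positivity)]
    have hlog : ε ^ 2 * Real.exp 1 / (c * Real.exp (-x)) = Real.exp x := by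
      rw [hc, Real.exp_neg]
      field_simp [Real.exp_ne_zero]
    have hexp_half : Real.exp (-x/2) ^ 2 = Real.exp (-x) := by
      rw [sq, ← Real.exp_add]; ring_nf
    have hsq : 2 * Real.exp 1 * π * (c * Real.exp (-x))
        = (Real.sqrt (2*π) * Real.exp 1 * ε * Real.exp (-x/2)) ^ 2 := by
      have h2π : Real.sqrt (2*π) ^ 2 = 2*π := Real.sq_sqrt (by positivity)
      calc 2 * Real.exp 1 * π * (c * Real.exp (-x))
          = (2*π) * (Real.exp 1 ^ 2 * (ε ^ 2 * Real.exp (-x))) := by rw [hc]; ring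
        _ = Real.sqrt (2*π) ^ 2 * (Real.exp 1 ^ 2 * (ε ^ 2 * Real.exp (-x/2) ^ 2)) := by
            rw [h2π, hexp_half]
        _ = (Real.sqrt (2*π) * Real.exp 1 * ε * Real.exp (-x/2)) ^ 2 := by ring
    have hsqrt : Real.sqrt (2 * Real.exp 1 * π * (c * Real.exp (-x)))
        = Real.sqrt (2*π) * Real.exp 1 * ε * Real.exp (-x/2) := by
      rw [hsq, Real.sqrt_sq (by positivity)]
    have hrpow : x ^ ((3:ℝ)/2 - 1) = Real.sqrt x := by
      rw [show (3:ℝ)/2 - 1 = 1/2 by norm_num, ← Real.sqrt_eq_rpow]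
    have hgval : g (f x) = Real.sqrt x / (ε * (Real.sqrt (2*π) * Real.exp 1 * ε * Real.exp (-x/2))) := by
      rw [hg, hf]
      simp only
      rw [hlog, Real.log_exp, hsqrt]
    rw [habs, hgval, smul_eq_mul, hrpow]
    have hE : Real.exp (-x) = Real.exp (-x/2) * Real.exp (-x/2) := by
      rw [← Real.exp_add]; ring_nf
    have h1 : Real.exp (-(2⁻¹ * x)) = Real.exp (-x/2) := by ring_nf
    rw [hE, h1]
    have hs2π : (0:ℝ) < Real.sqrt (2*π) := Real.sqrt_pos.2 (by positivity)
    have hEpos : (0:ℝ) < Real.exp (-x/2) := Real.exp_pos _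
    rw [hc]
    field_simp
  rw [h0, hchg, setIntegral_congr_fun measurableSet_Ioi hpt]
  rw [integral_const_mul, integral_rpow_mul_exp_neg_mul_Ioi (by norm_num) (by norm_num)]
  have hΓ : Real.Gamma ((3:ℝ)/2) = Real.sqrt π / 2 := by
    rw [show (3:ℝ)/2 = 1/2 + 1 by norm_num, Real.Gamma_add_one (by norm_num),
      Real.Gamma_one_half_eq]
    ring
  rw [hΓ]
  have h2 : ((1:ℝ) / 2⁻¹) ^ ((3:ℝ)/2) = 2 * Real.sqrt 2 := by
    rw [show (1:ℝ)/2⁻¹ = 2 by norm_num, show (3:ℝ)/2 = 1 + 1/2 by norm_num,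
      Real.rpow_add (by norm_num), Real.rpow_one, ← Real.sqrt_eq_rpow]
  rw [h2, Real.sqrt_mul (by norm_num : (0:ℝ) ≤ 2)]
  have hs2 : (0:ℝ) < Real.sqrt 2 := Real.sqrt_pos.2 (by norm_num)
  have hsπ : (0:ℝ) < Real.sqrt π := Real.sqrt_pos.2 pi_pos
  field_simp
end
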